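/- Let P ⊆ S^{N−1} be a finite root system in ℝ^N (N ≥ 1) satisfying condition (EA), let ρ ≥ 0 and r > 0, and let Ω ⊆ ℝ^N be an open set satisfying the reflection property (RP) with respect to P and ρ that contains the open ball 𝔅_r of radius σ1(P)⁻¹σ2(P)(ρ + 2r) about the origin. Then Ω has (r, σ3(P)^N)-uniform density: for every x ∈ ∂Ω and every s ∈ (0, r), σ3(P)^N ≤ λ(B(x, s) ∩ Ω)/λ(B(x, s)) ≤ 1 − σ3(P)^N, where λ denotes Lebesgue measure on ℝ^N. -/

import Mathlib

open scoped RealInnerProductSpace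
open Metric Set MeasureTheory

noncomputable section

abbrev E (N : ℕ) := EuclideanSpace ℝ (Fin N)

variable {N : ℕ}

/-- Reflection across the hyperplane `Π_p(s) = {x | x·p = s}`. -/
def reflect (p : E N) (s : ℝ) (x : E N) : E N := x - (2 * (⟪x, p⟫ - s)) • p

/-- Reflection across the hyperplane through the origin orthogonal to `p`. -/
def reflect0 (p : E N) : E N → E N := reflect p 0

/-- A finite root system of unit vectors. -/
def IsRootSystem (P : Set (E N)) : Prop :=
  P.Finite ∧ (∀ p ∈ P, ‖p‖ = 1) ∧
  (∀ p ∈ P, {q | q ∈ P ∧ ∃ c : ℝ, q = c • p} = {p, -p}) ∧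
  (∀ p ∈ P, reflect0 p '' P = P)

/-- Condition (EA): for every hyperplane through the origin (with normal `v ≠ 0`),
the part of `P` outside the hyperplane spans `ℝ^N`. -/
def CondEA (P : Set (E N)) : Prop :=
  ∀ v : E N, v ≠ 0 → Submodule.span ℝ {p | p ∈ P ∧ ⟪p, v⟫ ≠ 0} = ⊤

/-- The reflection property (RP) with respect to `P` and `ρ`. -/
def ReflProp (P : Set (E N)) (ρ : ℝ) (Ω : Set (E N)) : Prop :=
  ∀ p ∈ P, ∀ s > ρ,
    reflect p s '' Ω ∩ {x | ⟪x, p⟫ < s} ⊆ Ω ∩ {x | ⟪x, p⟫ < s}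

/-- `v` enumerates a basis of `ℝ^N` consisting of elements of `P`. -/
def BasisIn (P : Set (E N)) (v : Fin N → E N) : Prop :=
  (∀ i, v i ∈ P) ∧ LinearIndependent ℝ v ∧ Submodule.span ℝ (Set.range v) = ⊤

/-- The open cone `Co_r(A)` generated by a basis. -/
def Cone (r : ℝ) (v : Fin N → E N) : Set (E N) :=
  {x | ∃ a : Fin N → ℝ, (∀ i, 0 < a i) ∧ (∑ i, a i) < r ∧ x = ∑ i, a i • v i}

/-- `σ₁(P)`. -/
def sigma1 (P : Set (E N)) : ℝ :=
  sInf {s | ∃ p₁ ∈ P, s = sSup {t | ∃ v : Fin N → E N, BasisIn P v ∧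
    t = sInf (Set.range fun i => |⟪v i, p₁⟫|)}}

/-- `σ₂(P)`. -/
def sigma2 (P : Set (E N)) : ℝ :=
  sSup {t | ∃ x : E N, (∀ p ∈ P, |⟪p, x⟫| ≤ 1) ∧ t = ‖x‖}

/-- `σ₃(P)`. -/
def sigma3 (P : Set (E N)) : ℝ :=
  sInf {s | ∃ v : Fin N → E N, BasisIn P v ∧
    s = sSup {r | 0 < r ∧ ball ((1 / (2 * (N : ℝ))) • ∑ i, v i) r ⊆ Cone 1 v}}


/-!
A boundary point `x` lies outside `𝔅_r`, so `‖x‖ ≥ σ₁⁻¹σ₂(ρ + 2r)`. Let `p₁ ∈ P` maximize `x·p`;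
then `‖x‖ ≤ σ₂ (x·p₁)` by the definition of `σ₂`, and the roots `q` with `x·q ≥ σ₁ (x·p₁)` span
`ℝ^N`: for a basis `A` with `|a·p₁| ≥ σ₁` on `A`, each `±a` either has this property already or
its reflection across `p₁⊥` does. This gives a basis `A ⊆ P` with `x·p ≥ ρ + 2r` for `p ∈ A`.

Moving a point `z ∈ Ω` with `z·p > ρ + t` by `-u p`, `0 < u < t`, is a reflection across some
`Π_p(s)` with `s > ρ`, so (RP) keeps it in `Ω`; iterating over `A`, `z - Co_t(A) ⊆ Ω`.
Since `Co_s(A)` lies in `B(0, s)` and contains the ball of radius `s σ₃` about `s c`, where `c`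
is the centre used in `σ₃`, the ball `B(x, s)` contains the balls of radius `s σ₃` about `x - s c`
(inside `Ω`, using points of `Ω` close to `x`) and about `x + s c` (outside `Ω`, since `x ∉ Ω`).
-/

section RootSystem

variable {P : Set (E N)}

lemma IsRootSystem.neg_mem (hP : IsRootSystem P) {p : E N} (hp : p ∈ P) : -p ∈ P := by
  have : -p ∈ ({p, -p} : Set (E N)) := by simp
  rw [← hP.2.2.1 p hp] at this
  exact this.1

lemma IsRootSystem.reflect0_mem (hP : IsRootSystem P) {p q : E N} (hp : p ∈ P) (hq : q ∈ P) :
    reflect0 p q ∈ P :=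
  hP.2.2.2 p hp ▸ mem_image_of_mem _ hq

lemma IsRootSystem.abs_inner_le_one (hP : IsRootSystem P) {p q : E N} (hp : p ∈ P)
    (hq : q ∈ P) : |⟪p, q⟫| ≤ 1 := by
  simpa [hP.2.1 p hp, hP.2.1 q hq] using abs_real_inner_le_norm p q

lemma IsRootSystem.exists_abs_inner_le (hP : IsRootSystem P) (hne : P.Nonempty) (x : E N) :
    ∃ p₁ ∈ P, ∀ p ∈ P, |⟪p, x⟫| ≤ ⟪x, p₁⟫ := by
  obtain ⟨p₁, hp₁, hmax⟩ := P.exists_max_image (fun p => ⟪x, p⟫) hP.1 hne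
  refine ⟨p₁, hp₁, fun p hp => abs_le.2 ⟨?_, ?_⟩⟩
  · have := hmax _ (hP.neg_mem hp)
    rw [inner_neg_right, real_inner_comm] at this
    linarith
  · rw [real_inner_comm]
    exact hmax p hp

lemma IsRootSystem.mem_span_setOf_le_inner (hP : IsRootSystem P) {x p₁ u : E N} (hp₁ : p₁ ∈ P)
    (hu : u ∈ P) (hc : 0 ≤ ⟪x, p₁⟫) {α : ℝ} (hα : α ≤ 1) (hαu : α ≤ ⟪u, p₁⟫) :
    u ∈ Submodule.span ℝ {q | q ∈ P ∧ α * ⟪x, p₁⟫ ≤ ⟪x, q⟫} := by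
  set S := {q | q ∈ P ∧ α * ⟪x, p₁⟫ ≤ ⟪x, q⟫}
  by_cases hxu : α * ⟪x, p₁⟫ ≤ ⟪x, u⟫
  · exact Submodule.subset_span ⟨hu, hxu⟩
  have hp₁S : p₁ ∈ Submodule.span ℝ S := Submodule.subset_span ⟨hp₁, by nlinarith⟩
  -- `x·(2(u·p₁)p₁ - u) ≥ 2α(x·p₁) - x·u > α(x·p₁)`
  have hqS : -reflect0 p₁ u ∈ Submodule.span ℝ S := by
    refine Submodule.subset_span ⟨hP.neg_mem (hP.reflect0_mem hp₁ hu), ?_⟩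
    simp only [reflect0, reflect, inner_neg_right, inner_sub_right, real_inner_smul_right]
    nlinarith
  have hu_eq : u = (2 * ⟪u, p₁⟫) • p₁ - -reflect0 p₁ u := by
    simp [reflect0, reflect]
  rw [hu_eq]
  exact Submodule.sub_mem _ (Submodule.smul_mem _ _ hp₁S) hqS

lemma IsRootSystem.span_setOf_le_inner_eq_top (hP : IsRootSystem P) {x p₁ : E N} (hp₁ : p₁ ∈ P)
    (hc : 0 ≤ ⟪x, p₁⟫) {α : ℝ} (hα : α ≤ 1) {w : Fin N → E N} (hw : BasisIn P w)
    (hwα : ∀ i, α ≤ |⟪w i, p₁⟫|) :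
    Submodule.span ℝ {q | q ∈ P ∧ α * ⟪x, p₁⟫ ≤ ⟪x, q⟫} = ⊤ := by
  refine top_unique (hw.2.2.ge.trans (Submodule.span_le.2 ?_))
  rintro _ ⟨i, rfl⟩
  rcases le_total 0 ⟪w i, p₁⟫ with h | h
  · exact hP.mem_span_setOf_le_inner hp₁ (hw.1 i) hc hα (abs_of_nonneg h ▸ hwα i)
  · refine (Submodule.neg_mem_iff _).1
      (hP.mem_span_setOf_le_inner hp₁ (hP.neg_mem (hw.1 i)) hc hα ?_)
    rw [inner_neg_left]
    exact abs_of_nonpos h ▸ hwα i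

end RootSystem

section Bases

variable {P : Set (E N)}

lemma exists_basisIn_of_span_eq_top {T : Set (E N)} (hTP : T ⊆ P)
    (hT : Submodule.span ℝ T = ⊤) : ∃ v : Fin N → E N, BasisIn P v ∧ ∀ i, v i ∈ T := by
  obtain ⟨b, hbT, hbspan, hbli⟩ := exists_linearIndependent ℝ T
  let B := Module.Basis.mk hbli (by rw [Subtype.range_coe, hbspan, hT])
  let B' := B.reindex (B.indexEquiv (EuclideanSpace.basisFun (Fin N) ℝ).toBasis)
  have hB' : ∀ i, B' i ∈ T := fun i => by
    simp only [B', B, Module.Basis.reindex_apply, Module.Basis.mk_apply]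
    exact hbT (Subtype.prop _)
  exact ⟨B', ⟨fun i => hTP (hB' i), B'.linearIndependent, B'.span_eq⟩, hB'⟩

lemma CondEA.span_eq_top (hEA : CondEA P) : Submodule.span ℝ P = ⊤ := by
  rcases subsingleton_or_nontrivial (E N) with h | h
  · exact Subsingleton.elim _ _
  · obtain ⟨v, hv⟩ := exists_ne (0 : E N)
    exact top_unique ((hEA v hv).ge.trans (Submodule.span_mono fun p hp => hp.1))

lemma CondEA.exists_basisIn (hEA : CondEA P) : ∃ v : Fin N → E N, BasisIn P v :=
  (exists_basisIn_of_span_eq_top subset_rfl hEA.span_eq_top).imp fun _ h => h.1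

lemma Set.Finite.setOf_exists_eq {α β : Type*} {s : Set α} (hs : s.Finite) (f : α → β) :
    {b | ∃ a ∈ s, b = f a}.Finite :=
  (hs.image f).subset (by rintro _ ⟨a, ha, rfl⟩; exact ⟨a, ha, rfl⟩)

lemma Set.Finite.setOf_basisIn (hP : P.Finite) : {v : Fin N → E N | BasisIn P v}.Finite :=
  (Set.Finite.pi fun _ => hP).subset fun _ hv i _ => hv.1 i

end Bases

section Sigma1

variable {P : Set (E N)}

/-- The inner maximum in the definition of `σ₁(P)`: `σ₁(P) = min_{p ∈ P} sigma1At P p`. -/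
def sigma1At (P : Set (E N)) (p : E N) : ℝ :=
  sSup {t | ∃ v : Fin N → E N, BasisIn P v ∧ t = sInf (Set.range fun i => |⟪v i, p⟫|)}

lemma iInf_abs_inner_le_sigma1At (hP : P.Finite) {v : Fin N → E N} (hv : BasisIn P v)
    (p : E N) : ⨅ i, |⟪v i, p⟫| ≤ sigma1At P p :=
  le_csSup (hP.setOf_basisIn.setOf_exists_eq _).bddAbove ⟨v, hv, rfl⟩

lemma exists_basisIn_sigma1_le_abs_inner (hP : IsRootSystem P) (hEA : CondEA P) {p : E N}
    (hp : p ∈ P) : ∃ w : Fin N → E N, BasisIn P w ∧ ∀ i, sigma1 P ≤ |⟪w i, p⟫| := by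
  obtain ⟨v₀, hv₀⟩ := hEA.exists_basisIn
  obtain ⟨w, hw, hwp⟩ : sigma1At P p ∈ _ :=
    Set.Nonempty.csSup_mem ⟨_, v₀, hv₀, rfl⟩ (hP.1.setOf_basisIn.setOf_exists_eq _)
  have hσ : sigma1 P ≤ sigma1At P p := csInf_le (hP.1.setOf_exists_eq _).bddBelow ⟨p, hp, rfl⟩
  exact ⟨w, hw, fun i => hσ.trans (hwp ▸ ciInf_le (Set.finite_range _).bddBelow i)⟩

lemma sigma1_pos [NeZero N] (hP : IsRootSystem P) (hEA : CondEA P) : 0 < sigma1 P := by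
  obtain ⟨v₀, hv₀⟩ := hEA.exists_basisIn
  obtain ⟨p, hp, hσ⟩ : sigma1 P ∈ _ :=
    Set.Nonempty.csInf_mem ⟨_, v₀ 0, hv₀.1 0, rfl⟩ (hP.1.setOf_exists_eq _)
  have hp0 : p ≠ 0 := norm_ne_zero_iff.1 (by rw [hP.2.1 p hp]; exact one_ne_zero)
  obtain ⟨w, hw, hwp⟩ := exists_basisIn_of_span_eq_top (fun q hq => hq.1) (hEA p hp0)
  obtain ⟨i, hi⟩ := exists_eq_ciInf_of_finite (f := fun i => |⟪w i, p⟫|)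
  calc 0 < |⟪w i, p⟫| := abs_pos.2 (hwp i).2
    _ = ⨅ i, |⟪w i, p⟫| := hi
    _ ≤ sigma1 P := hσ ▸ iInf_abs_inner_le_sigma1At hP.1 hw p

end Sigma1

section Sigma2

variable {P : Set (E N)}

lemma exists_norm_le_mul_of_abs_inner_le (hEA : CondEA P) :
    ∃ K : ℝ, ∀ (x : E N) (c : ℝ), 0 ≤ c → (∀ p ∈ P, |⟪p, x⟫| ≤ c) → ‖x‖ ≤ K * c := by
  obtain ⟨w, hw⟩ := hEA.exists_basisIn
  let L : E N →ₗ[ℝ] (Fin N → ℝ) := LinearMap.pi fun i => innerₛₗ ℝ (w i)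
  have hker : LinearMap.ker L = ⊥ := by
    refine LinearMap.ker_eq_bot'.2 fun x hx => ?_
    refine InnerProductSpace.ext_inner_left_basis (Module.Basis.mk hw.2.1 hw.2.2.ge) fun i => ?_
    simpa [L] using congrFun hx i
  obtain ⟨K, -, hK⟩ := L.exists_antilipschitzWith hker
  refine ⟨K, fun x c hc hx => (hK.le_mul_norm (map_zero L) x).trans ?_⟩
  gcongr
  refine (pi_norm_le_iff_of_nonneg hc).2 fun i => ?_
  simpa [L] using hx _ (hw.1 i)

lemma norm_le_sigma2_mul (hEA : CondEA P) {x : E N} {c : ℝ} (hc : 0 ≤ c)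
    (hx : ∀ p ∈ P, |⟪p, x⟫| ≤ c) : ‖x‖ ≤ sigma2 P * c := by
  obtain ⟨K, hK⟩ := exists_norm_le_mul_of_abs_inner_le hEA
  rcases hc.eq_or_lt with rfl | hc
  · simpa using hK x 0 le_rfl hx
  have hbdd : BddAbove {t | ∃ y : E N, (∀ p ∈ P, |⟪p, y⟫| ≤ 1) ∧ t = ‖y‖} :=
    ⟨K * 1, by rintro _ ⟨y, hy, rfl⟩; exact hK y 1 zero_le_one hy⟩
  have hx' : ∀ p ∈ P, |⟪p, c⁻¹ • x⟫| ≤ 1 := fun p hp => by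
    rw [real_inner_smul_right, abs_mul, abs_of_pos (inv_pos.2 hc), inv_mul_le_iff₀ hc, mul_one]
    exact hx p hp
  have h := le_csSup hbdd ⟨c⁻¹ • x, hx', rfl⟩
  rwa [norm_smul, Real.norm_of_nonneg (inv_pos.2 hc).le, inv_mul_le_iff₀ hc, mul_comm] at h

lemma sigma2_pos [NeZero N] (hP : IsRootSystem P) (hEA : CondEA P) : 0 < sigma2 P := by
  obtain ⟨v₀, hv₀⟩ := hEA.exists_basisIn
  have h := norm_le_sigma2_mul hEA zero_le_one fun q hq => hP.abs_inner_le_one hq (hv₀.1 0)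
  rw [hP.2.1 _ (hv₀.1 0), mul_one] at h
  exact one_pos.trans_le h

end Sigma2

lemma exists_basisIn_le_inner [NeZero N] {P : Set (E N)} (hP : IsRootSystem P) (hEA : CondEA P)
    {x : E N} {d : ℝ} (hx : (sigma1 P)⁻¹ * sigma2 P * d ≤ ‖x‖) :
    ∃ v : Fin N → E N, BasisIn P v ∧ ∀ i, d ≤ ⟪x, v i⟫ := by
  obtain ⟨v₀, hv₀⟩ := hEA.exists_basisIn
  obtain ⟨p₁, hp₁, hmax⟩ := hP.exists_abs_inner_le ⟨v₀ 0, hv₀.1 0⟩ x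
  have hc : 0 ≤ ⟪x, p₁⟫ := (abs_nonneg _).trans (hmax p₁ hp₁)
  have hd : d ≤ sigma1 P * ⟪x, p₁⟫ := by
    have h := hx.trans (norm_le_sigma2_mul hEA hc hmax)
    rwa [mul_comm _ (sigma2 P), mul_assoc, mul_le_mul_iff_right₀ (sigma2_pos hP hEA),
      inv_mul_le_iff₀ (sigma1_pos hP hEA)] at h
  obtain ⟨w, hw, hwσ⟩ := exists_basisIn_sigma1_le_abs_inner hP hEA hp₁
  have hσ1 : sigma1 P ≤ 1 := (hwσ 0).trans (hP.abs_inner_le_one (hw.1 0) hp₁)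
  obtain ⟨v, hv, hvS⟩ := exists_basisIn_of_span_eq_top (fun q hq => hq.1)
    (hP.span_setOf_le_inner_eq_top hp₁ hc hσ1 hw hwσ)
  exact ⟨v, hv, fun i => hd.trans (hvS i).2⟩

section Cone

variable {P : Set (E N)}

def coneCenter (v : Fin N → E N) : E N := (1 / (2 * (N : ℝ))) • ∑ i, v i

lemma norm_sum_smul_le_sum {F ι : Type*} [SeminormedAddCommGroup F] [NormedSpace ℝ F]
    (s : Finset ι) {a : ι → ℝ} {v : ι → F} (ha : ∀ i ∈ s, 0 ≤ a i) (hv : ∀ i ∈ s, ‖v i‖ ≤ 1) :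
    ‖∑ i ∈ s, a i • v i‖ ≤ ∑ i ∈ s, a i :=
  norm_sum_le_of_le s fun i hi => by
    rw [norm_smul, Real.norm_of_nonneg (ha i hi)]
    exact mul_le_of_le_one_right (ha i hi) (hv i hi)

lemma cone_subset_ball {v : Fin N → E N} (hv : ∀ i, ‖v i‖ ≤ 1) (t : ℝ) :
    Cone t v ⊆ ball 0 t := by
  rintro _ ⟨a, ha, hat, rfl⟩
  exact mem_ball_zero_iff.2
    ((norm_sum_smul_le_sum _ (fun i _ => (ha i).le) fun i _ => hv i).trans_lt hat)

lemma smul_mem_cone {v : Fin N → E N} {c t : ℝ} {y : E N} (hc : 0 < c) (hy : y ∈ Cone t v) :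
    c • y ∈ Cone (c * t) v := by
  obtain ⟨a, ha, hat, rfl⟩ := hy
  refine ⟨fun i => c * a i, fun i => mul_pos hc (ha i), ?_, ?_⟩
  · rw [← Finset.mul_sum]
    exact mul_lt_mul_of_pos_left hat hc
  · simp only [Finset.smul_sum, smul_smul]

lemma sigma3_nonneg (P : Set (E N)) : 0 ≤ sigma3 P :=
  Real.sInf_nonneg <| by
    rintro _ ⟨v, -, rfl⟩
    exact Real.sSup_nonneg fun r hr => hr.1.le

lemma ball_coneCenter_subset_cone {v : Fin N → E N} (hv : BasisIn P v) :
    ball (coneCenter v) (sigma3 P) ⊆ Cone 1 v := by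
  intro y hy
  set R := {r | 0 < r ∧ ball (coneCenter v) r ⊆ Cone 1 v}
  have hσ : sigma3 P ≤ sSup R :=
    csInf_le ⟨0, by rintro _ ⟨v, -, rfl⟩; exact Real.sSup_nonneg fun r hr => hr.1.le⟩ ⟨v, hv, rfl⟩
  have hy' : dist y (coneCenter v) < sSup R := (mem_ball.1 hy).trans_le hσ
  rcases R.eq_empty_or_nonempty with hR | hR
  · rw [hR, Real.sSup_empty] at hy'
    exact absurd hy' dist_nonneg.not_gt
  obtain ⟨r, hr, hyr⟩ := exists_lt_of_lt_csSup hR hy'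
  exact hr.2 hyr

lemma ball_smul_coneCenter_subset_cone {v : Fin N → E N} (hv : BasisIn P v) {t : ℝ}
    (ht : 0 < t) : ball (t • coneCenter v) (t * sigma3 P) ⊆ Cone t v := by
  rw [show t * sigma3 P = ‖t‖ * sigma3 P by rw [Real.norm_of_nonneg ht.le],
    ← _root_.smul_ball ht.ne']
  rintro _ ⟨y, hy, rfl⟩
  simpa using smul_mem_cone ht (ball_coneCenter_subset_cone hv hy)

end Cone

section Reflection

variable {P : Set (E N)} {ρ : ℝ} {Ω : Set (E N)}

lemma inner_le_inner_add_norm_sub {w : E N} (hw : ‖w‖ = 1) (a b : E N) :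
    ⟪a, w⟫ ≤ ⟪b, w⟫ + ‖a - b‖ := by
  have := real_inner_le_norm (a - b) w
  rw [inner_sub_left, hw, mul_one] at this
  linarith

/-- `z - u p` is the mirror image of `z` in `Π_p(z·p - u/2)`. -/
lemma ReflProp.sub_smul_mem (hΩ : ReflProp P ρ Ω) {p z : E N} (hp : p ∈ P) (hp1 : ‖p‖ = 1)
    (hz : z ∈ Ω) {u : ℝ} (hu : 0 < u) (huz : u < 2 * (⟪z, p⟫ - ρ)) : z - u • p ∈ Ω := by
  have hpp : ⟪p, p⟫ = 1 := by rw [real_inner_self_eq_norm_sq, hp1, one_pow]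
  have hrefl : reflect p (⟪z, p⟫ - u / 2) z = z - u • p := by
    unfold reflect
    congr 2
    ring
  refine (hΩ p hp _ (by linarith) ⟨⟨z, hz, hrefl⟩, ?_⟩).1
  show ⟪z - u • p, p⟫ < ⟪z, p⟫ - u / 2
  rw [inner_sub_left, real_inner_smul_left, hpp]
  linarith

lemma ReflProp.sub_mem_of_mem_cone (hΩ : ReflProp P ρ Ω) (hP1 : ∀ p ∈ P, ‖p‖ = 1)
    {v : Fin N → E N} (hv : ∀ i, v i ∈ P) {z y : E N} {t : ℝ} (hz : z ∈ Ω)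
    (hy : y ∈ Cone t v) (hzv : ∀ i, ρ + t ≤ ⟪z, v i⟫) : z - y ∈ Ω := by
  obtain ⟨a, ha, hat, rfl⟩ := hy
  suffices ∀ s : Finset (Fin N), z - ∑ i ∈ s, a i • v i ∈ Ω from this Finset.univ
  intro s
  induction s using Finset.induction_on with
  | empty => simpa using hz
  | insert j s hj ih =>
    have hsum : ∑ i ∈ s, a i + a j < t :=
      calc ∑ i ∈ s, a i + a j = ∑ i ∈ insert j s, a i := by rw [Finset.sum_insert hj, add_comm]
        _ ≤ ∑ i, a i :=
          Finset.sum_le_sum_of_subset_of_nonneg (Finset.subset_univ _) fun i _ _ => (ha i).le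
        _ < t := hat
    have hnorm : ‖∑ i ∈ s, a i • v i‖ ≤ ∑ i ∈ s, a i :=
      norm_sum_smul_le_sum s (fun i _ => (ha i).le) fun i _ => (hP1 _ (hv i)).le
    have hinner := inner_le_inner_add_norm_sub (hP1 _ (hv j)) z (z - ∑ i ∈ s, a i • v i)
    rw [sub_sub_cancel] at hinner
    have := hΩ.sub_smul_mem (hv j) (hP1 _ (hv j)) ih (ha j) (by linarith [hzv j, ha j])
    rwa [Finset.sum_insert hj, add_comm, ← sub_sub]

end Reflection

section Density

variable {P : Set (E N)} {ρ r s : ℝ} {Ω : Set (E N)} {v : Fin N → E N} {x : E N}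

lemma ball_sub_smul_coneCenter_subset (hP1 : ∀ p ∈ P, ‖p‖ = 1) (hΩ : ReflProp P ρ Ω)
    (hv : BasisIn P v) (hxv : ∀ i, ρ + 2 * r ≤ ⟪x, v i⟫) (hx : x ∈ closure Ω) (hs : 0 < s)
    (hsr : s < r) : ball (x - s • coneCenter v) (s * sigma3 P) ⊆ ball x s ∩ Ω := by
  intro w hw
  rw [mem_ball, ← dist_sub_left x, sub_sub_cancel] at hw
  have hxw : x - w ∈ Cone s v := ball_smul_coneCenter_subset_cone hv hs hw
  obtain ⟨y, hyΩ, hxy⟩ := Metric.mem_closure_iff.1 hx _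
    (lt_min (sub_pos.2 hw) (sub_pos.2 hsr))
  rw [lt_min_iff] at hxy
  have hyw : y - w ∈ Cone s v := by
    refine ball_smul_coneCenter_subset_cone hv hs ?_
    calc dist (y - w) (s • coneCenter v)
        ≤ dist (y - w) (x - w) + dist (x - w) (s • coneCenter v) := dist_triangle _ _ _
      _ = dist x y + dist (x - w) (s • coneCenter v) := by rw [dist_sub_right, dist_comm]
      _ < s * sigma3 P := by linarith [hxy.1]
  have hyv : ∀ i, ρ + s ≤ ⟪y, v i⟫ := fun i => by
    have := inner_le_inner_add_norm_sub (hP1 _ (hv.1 i)) x y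
    rw [← dist_eq_norm] at this
    linarith [hxv i, hxy.2]
  have hxw_norm : ‖x - w‖ < s :=
    mem_ball_zero_iff.1 (cone_subset_ball (fun i => (hP1 _ (hv.1 i)).le) s hxw)
  refine ⟨mem_ball_iff_norm'.2 hxw_norm, ?_⟩
  simpa using hΩ.sub_mem_of_mem_cone hP1 hv.1 hyΩ hyw hyv

lemma ball_add_smul_coneCenter_subset (hP1 : ∀ p ∈ P, ‖p‖ = 1) (hΩ : ReflProp P ρ Ω)
    (hv : BasisIn P v) (hxv : ∀ i, ρ + 2 * r ≤ ⟪x, v i⟫) (hx : x ∉ Ω) (hs : 0 < s)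
    (hsr : s < r) : ball (x + s • coneCenter v) (s * sigma3 P) ⊆ ball x s \ Ω := by
  intro w hw
  rw [mem_ball, ← dist_sub_right _ _ x, add_sub_cancel_left] at hw
  have hwx : w - x ∈ Cone s v := ball_smul_coneCenter_subset_cone hv hs hw
  have hnorm : ‖w - x‖ < s :=
    mem_ball_zero_iff.1 (cone_subset_ball (fun i => (hP1 _ (hv.1 i)).le) s hwx)
  refine ⟨mem_ball_iff_norm.2 hnorm, fun hwΩ => hx ?_⟩
  have hwv : ∀ i, ρ + s ≤ ⟪w, v i⟫ := fun i => by
    have := inner_le_inner_add_norm_sub (hP1 _ (hv.1 i)) x w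
    rw [norm_sub_rev] at this
    linarith [hxv i]
  simpa using hΩ.sub_mem_of_mem_cone hP1 hv.1 hwΩ hwx hwv

end Density

lemma measure_ball_mul_eq {F : Type*} [NormedAddCommGroup F] [NormedSpace ℝ F] [MeasurableSpace F]
    [BorelSpace F] [FiniteDimensional ℝ F] [Nontrivial F] (μ : Measure F) [μ.IsAddHaarMeasure]
    (x y : F) {s k : ℝ} (hs : 0 ≤ s) (hk : 0 ≤ k) :
    μ (ball y (s * k)) = ENNReal.ofReal (k ^ Module.finrank ℝ F) * μ (ball x s) := by
  rw [Measure.addHaar_ball μ y (mul_nonneg hs hk), Measure.addHaar_ball μ x hs, ← mul_assoc,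
    ← ENNReal.ofReal_mul (by positivity), mul_pow, mul_comm (k ^ _)]

lemma ofReal_le_measure_inter_div_and_div_le {α : Type*} [MeasurableSpace α] {μ : Measure α}
    {B U : Set α} (hU : MeasurableSet U) (hB0 : μ B ≠ 0) (hB : μ B ≠ ⊤) {k : ℝ} (hk : 0 ≤ k)
    (hin : ENNReal.ofReal k * μ B ≤ μ (B ∩ U)) (hout : ENNReal.ofReal k * μ B ≤ μ (B \ U)) :
    ENNReal.ofReal k ≤ μ (B ∩ U) / μ B ∧ μ (B ∩ U) / μ B ≤ ENNReal.ofReal (1 - k) := by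
  refine ⟨(ENNReal.le_div_iff_mul_le (.inl hB0) (.inl hB)).2 hin,
    (ENNReal.div_le_iff_le_mul (.inl hB0) (.inl hB)).2 ?_⟩
  rw [ENNReal.ofReal_sub 1 hk, ENNReal.ofReal_one, ENNReal.sub_mul fun _ _ => hB, one_mul]
  refine ENNReal.le_sub_of_add_le_right (ENNReal.mul_ne_top ENNReal.ofReal_ne_top hB) ?_
  calc μ (B ∩ U) + ENNReal.ofReal k * μ B ≤ μ (B ∩ U) + μ (B \ U) := add_le_add le_rfl hout
    _ = μ B := measure_inter_add_sdiff B hU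

theorem uniform_density_general (N : ℕ) (hN : 1 ≤ N) (P : Set (E N))
    (hP : IsRootSystem P) (hEA : CondEA P) (ρ r : ℝ)
    (Ω : Set (E N)) (hopen : IsOpen Ω) (hΩ : ReflProp P ρ Ω)
    (hball : ball (0 : E N) ((sigma1 P)⁻¹ * sigma2 P * (ρ + 2 * r)) ⊆ Ω)
    (x : E N) (hx : x ∈ frontier Ω) (s : ℝ) (hs0 : 0 < s) (hsr : s < r) :
    ENNReal.ofReal (sigma3 P ^ N) ≤ volume (ball x s ∩ Ω) / volume (ball x s) ∧
    volume (ball x s ∩ Ω) / volume (ball x s) ≤ ENNReal.ofReal (1 - sigma3 P ^ N) := by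
  have : NeZero N := ⟨by omega⟩
  rw [hopen.frontier_eq] at hx
  have hfar : (sigma1 P)⁻¹ * sigma2 P * (ρ + 2 * r) ≤ ‖x‖ :=
    not_lt.1 fun h => hx.2 (hball (mem_ball_zero_iff.2 h))
  obtain ⟨v, hv, hxv⟩ := exists_basisIn_le_inner hP hEA hfar
  have hvol (y : E N) : volume (ball y (s * sigma3 P)) =
      ENNReal.ofReal (sigma3 P ^ N) * volume (ball x s) := by
    rw [measure_ball_mul_eq volume x y hs0.le (sigma3_nonneg P), finrank_euclideanSpace_fin]
  refine ofReal_le_measure_inter_div_and_div_le hopen.measurableSet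
    (measure_ball_pos volume x hs0).ne' measure_ball_lt_top.ne (pow_nonneg (sigma3_nonneg P) N)
    ?_ ?_
  · exact (hvol _).symm.trans_le
      (measure_mono (ball_sub_smul_coneCenter_subset hP.2.1 hΩ hv hxv hx.1 hs0 hsr))
  · exact (hvol _).symm.trans_le
      (measure_mono (ball_add_smul_coneCenter_subset hP.2.1 hΩ hv hxv hx.2 hs0 hsr))

/-- `(r, σ₃(P)^N)`-uniform density for sets with the reflection
property containing `𝔅_r`. -/
theorem uniform_density (N : ℕ) (hN : 1 ≤ N) (P : Set (E N))
    (hP : IsRootSystem P) (hEA : CondEA P) (ρ r : ℝ) (hρ : 0 ≤ ρ) (hr : 0 < r)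
    (Ω : Set (E N)) (hopen : IsOpen Ω) (hΩ : ReflProp P ρ Ω)
    (hball : ball (0 : E N) ((sigma1 P)⁻¹ * sigma2 P * (ρ + 2 * r)) ⊆ Ω)
    (x : E N) (hx : x ∈ frontier Ω) (s : ℝ) (hs0 : 0 < s) (hsr : s < r) :
    ENNReal.ofReal (sigma3 P ^ N) ≤ volume (ball x s ∩ Ω) / volume (ball x s) ∧
    volume (ball x s ∩ Ω) / volume (ball x s) ≤ ENNReal.ofReal (1 - sigma3 P ^ N) :=
  uniform_density_general N hN P hP hEA ρ r Ω hopen hΩ hball x hx s hs0 hsr
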